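/- arXiv:0808.2381 — 4 statements merged into one kernel-verified Lean document; each statement's English description precedes it below -/
import Mathlib

section
/- (Greenberg) Let F be a free group of finite rank, let H be a finitely generated subgroup of F, and let K and L be subgroups of F with H ≤ K and H ≤ L such that H has finite index in K and H has finite index in L. Then H has finite index in the subgroup K ⊔ L generated by K and L. -/
/-!
If `H ≤ K` has finite index, `K` lies in the commensurator of `H`; so it suffices that a nontrivial
finitely generated `H ≤ F` has finite index in its commensurator. Fix `1 ≠ h₀ ∈ H` with reduced
word `u c u⁻¹`, `c` cyclically reduced. An element `g` of the commensurator conjugates some power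
of `h₀` into `H`, hence also `h₀ˢ` and `h₀⁻ˢ` for a large `s`. In the reduced word of
`g h₀ˢ g⁻¹ ∈ H` the word of `g` survives up to the tail cancelling against `h₀ˢ`, and likewise for
`h₀⁻ˢ`; these two tails cannot both be longer than `u c`, so `g = p t` where `p` is a prefix of
the word of an element of `H` and `t⁻¹` is a prefix of `u c` or of `u c⁻¹`. Finally, the prefixes
of words of elements of `H = ⟨S⟩` lie in finitely many right cosets of `H`, those of the prefixes
of the words in `S`.
-/

namespace Subgroup

open Commensurable Pointwise

variable {G : Type*} [Group G]

theorem relIndex_ne_zero_of_forall_mul_inv_mem {H M : Subgroup G} {S : Set G} (hS : S.Finite)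
    (hHM : H ≤ M) (hcover : ∀ g ∈ M, ∃ s ∈ S, g * s⁻¹ ∈ H) : H.relIndex M ≠ 0 := by
  let T : Set M := {m | (m : G)⁻¹ ∈ S}
  have hT : T.Finite := hS.preimage (inv_injective.comp Subtype.val_injective).injOn
  have : Finite (M ⧸ H.subgroupOf M) := by
    refine Set.finite_univ_iff.1 ((hT.image QuotientGroup.mk).subset fun q _ => ?_)
    obtain ⟨m, rfl⟩ := QuotientGroup.mk_surjective q
    obtain ⟨s, hs, hsH⟩ := hcover _ (inv_mem m.2)
    have hsM : s⁻¹ ∈ M := by simpa using mul_mem m.2 (hHM hsH)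
    refine ⟨⟨s⁻¹, hsM⟩, by simpa [T] using hs, QuotientGroup.eq.2 ?_⟩
    simpa [mem_subgroupOf] using inv_mem hsH
  exact index_ne_zero_of_finite

theorem le_commensurator {H K : Subgroup G} (hHK : H ≤ K) (hK : H.relIndex K ≠ 0) :
    K ≤ commensurator H := fun k hk => by
  have hcomm : Commensurable H K := ⟨hK, by simp [relIndex_eq_one.2 hHK]⟩
  have hKk : ConjAct.toConjAct k • K = K := conjAct_pointwise_smul_eq_self (le_normalizer hk)
  have hconj := hcomm.conj (ConjAct.toConjAct k)
  rw [hKk] at hconj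
  exact hconj.trans hcomm.symm

theorem exists_pow_conj_mem_of_mem_commensurator {H : Subgroup G} {g x : G}
    (hg : g ∈ commensurator H) (hx : x ∈ H) : ∃ n ≠ 0, g⁻¹ * x ^ n * g ∈ H := by
  rw [commensurator_mem_iff] at hg
  obtain ⟨n, hn, -, hxn⟩ := exists_pow_mem_of_relIndex_ne_zero hg.1 hx
  refine ⟨n, hn.ne', ?_⟩
  have := (mem_inf.1 hxn).1
  rwa [mem_pointwise_smul_iff_inv_smul_mem, ← ConjAct.toConjAct_inv,
    ConjAct.toConjAct_inv_smul] at this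

theorem eq_bot_of_relIndex_bot_ne_zero [IsMulTorsionFree G] {K : Subgroup G}
    (hK : (⊥ : Subgroup G).relIndex K ≠ 0) : K = ⊥ := by
  rw [relIndex, bot_subgroupOf, index_bot] at hK
  have : Finite K := Nat.finite_of_card_ne_zero hK
  rw [eq_bot_iff_forall]
  intro k hk
  have : IsOfFinOrder (⟨k, hk⟩ : K) := isOfFinOrder_of_finite _
  exact congrArg Subtype.val this.eq_one'

end Subgroup

namespace FreeGroup

open List Subgroup.Commensurable Pointwise

variable {α : Type*} {L₁ L₂ u c w Y Y' : List (α × Bool)}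

theorem IsCyclicallyReduced.eq_nil_of_invRev_eq (hc : IsCyclicallyReduced c)
    (h : invRev c = c) : c = [] := by
  by_contra hne
  set x := c.getLast hne
  have hlast : c.getLast? = some x := getLast?_eq_some_getLast hne
  have hhead : c.head? = some (x.1, !x.2) := by
    rw [← h, invRev, head?_reverse, getLast?_map, hlast]
    rfl
  have := hc.2 x hlast _ hhead rfl
  simp at this

theorem IsCyclicallyReduced.length_lt_of_isPrefix (hc : IsCyclicallyReduced c) (hc0 : c ≠ [])
    (h : w <+: u ++ c ++ Y) (h' : w <+: u ++ invRev c ++ Y') :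
    w.length < u.length + c.length := by
  by_contra! hw
  have hu : u ++ c <+: w := prefix_of_prefix_length_le (prefix_append _ _) h (by simpa using hw)
  have hu' : u ++ invRev c <+: w :=
    prefix_of_prefix_length_le (prefix_append _ _) h' (by simpa [invRev_length] using hw)
  have heq : u ++ c = u ++ invRev c :=
    (prefix_of_prefix_length_le hu hu' (by simp [invRev_length])).eq_of_length
      (by simp [invRev_length])
  exact hc0 (hc.eq_nil_of_invRev_eq (append_cancel_left heq).symm)

section DecidableEq

variable [DecidableEq α]

theorem IsReduced.exists_reduce_append (h₁ : IsReduced L₁) (h₂ : IsReduced L₂) :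
    ∃ a b c, L₁ = a ++ b ∧ L₂ = invRev b ++ c ∧ reduce (L₁ ++ L₂) = a ++ c := by
  induction L₁ with
  | nil => exact ⟨[], [], L₂, rfl, by simp [invRev], h₂.reduce_eq⟩
  | cons x L ih =>
    obtain ⟨a, b, c, rfl, rfl, hred⟩ := ih (h₁.infix (suffix_cons x L).isInfix)
    rw [cons_append, reduce.cons, hred]
    rcases a with _ | ⟨y, a⟩
    · rcases c with _ | ⟨z, c⟩
      · exact ⟨[x], b, [], rfl, rfl, rfl⟩
      · dsimp only [nil_append]
        split_ifs with hxz
        · refine ⟨[], x :: b, c, rfl, ?_, rfl⟩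
          have hz : z = (x.1, !x.2) := Prod.ext hxz.1.symm (by simp [hxz.2])
          simp [invRev, hz]
        · exact ⟨[x], b, z :: c, rfl, rfl, rfl⟩
    · have hxy : ¬(x.1 = y.1 ∧ x.2 = !y.2) := fun hxy => by
        have := ((isReduced_cons_cons.1 h₁).1 hxy.1).symm.trans hxy.2
        simp at this
      simp only [cons_append, if_neg hxy]
      exact ⟨x :: y :: a, b, c, rfl, rfl, rfl⟩

theorem exists_toWord_mul (x y : FreeGroup α) :
    ∃ a b c, x.toWord = a ++ b ∧ y.toWord = invRev b ++ c ∧ (x * y).toWord = a ++ c := by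
  rw [toWord_mul]
  exact isReduced_toWord.exists_reduce_append isReduced_toWord

theorem toWord_pow_of_toWord_eq {x : FreeGroup α} (hx : x.toWord = u ++ c ++ invRev u)
    (hc : IsCyclicallyReduced c) {n : ℕ} (hn : n ≠ 0) :
    (x ^ n).toWord = u ++ (replicate n c).flatten ++ invRev u := by
  have hconj : x = mk u * mk c * (mk u)⁻¹ := by
    rw [← mk_toWord (x := x), hx, inv_mk, mul_mk, mul_mk]
  rw [hconj, conj_pow, pow_mk, inv_mk, mul_mk, mul_mk, toWord_mk]
  exact (IsReduced.append_flatten_replicate_append hc (hx ▸ isReduced_toWord) hn).reduce_eq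

theorem exists_toWord_eq_append_isPrefix_conj (g y : FreeGroup α)
    (hlen : 2 * g.toWord.length < y.toWord.length) :
    ∃ a b, g.toWord = a ++ b ∧ invRev b <+: y.toWord ∧ a <+: (g * y * g⁻¹).toWord := by
  obtain ⟨a, b, c, hg, hy, hgy⟩ := exists_toWord_mul g y
  obtain ⟨A, B, C, hgy', hg', hgyg⟩ := exists_toWord_mul (g * y) g⁻¹
  have hlg := congrArg length hg
  have hly := congrArg length hy
  have hlg' := congrArg length hg'
  have hlgy := hgy.symm.trans hgy'
  have hlgy' := congrArg length hlgy
  simp only [length_append, toWord_inv, invRev_length] at hlg hly hlg' hlgy'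
  have haA : a <+: A :=
    prefix_of_prefix_length_le (prefix_append a c) (hlgy ▸ prefix_append A B) (by omega)
  exact ⟨a, b, hg, hy ▸ prefix_append _ _, hgyg ▸ haA.trans (prefix_append A C)⟩

theorem exists_toWord_eq_append_of_conj_mem {H : Subgroup (FreeGroup α)} {g y : FreeGroup α}
    (hy : g * y * g⁻¹ ∈ H) (hlen : 2 * g.toWord.length < y.toWord.length)
    (hc : IsCyclicallyReduced c) (hc0 : c ≠ [])
    (hyw : y.toWord = u ++ c ++ Y) (hyw' : y⁻¹.toWord = u ++ invRev c ++ Y') :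
    ∃ g₁ g₂, g.toWord = g₁ ++ g₂ ∧ (∃ h ∈ H, g₁ <+: h.toWord) ∧
      (invRev g₂ <+: u ++ c ∨ invRev g₂ <+: u ++ invRev c) := by
  obtain ⟨a, b, hab, hb, ha⟩ := exists_toWord_eq_append_isPrefix_conj g y hlen
  obtain ⟨a', b', hab', hb', ha'⟩ :=
    exists_toWord_eq_append_isPrefix_conj g y⁻¹ (by rwa [toWord_inv, invRev_length])
  have hy' : g * y⁻¹ * g⁻¹ ∈ H := by simpa [mul_assoc] using H.inv_mem hy
  by_cases hshort : b.length ≤ u.length + c.length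
  · refine ⟨a, b, hab, ⟨_, hy, ha⟩, Or.inl ?_⟩
    exact (isPrefix_append_of_length (by simpa [invRev_length])).1 (hyw ▸ hb)
  by_cases hshort' : b'.length ≤ u.length + c.length
  · refine ⟨a', b', hab', ⟨_, hy', ha'⟩, Or.inr ?_⟩
    exact (isPrefix_append_of_length (by simpa [invRev_length])).1 (hyw' ▸ hb')
  have invRev_isPrefix {v v' : List (α × Bool)} (h : v <:+ v') : invRev v <+: invRev v' := by
    simpa [invRev] using (h.map _).reverse
  -- Both tails are long; the shorter one, inverted, would start with `u ++ c` and `u ++ invRev c`.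
  exfalso
  rcases suffix_or_suffix_of_suffix ⟨a, hab.symm⟩ ⟨a', hab'.symm⟩ with h | h
  · have := hc.length_lt_of_isPrefix hc0 (hyw ▸ hb) (hyw' ▸ (invRev_isPrefix h).trans hb')
    rw [invRev_length] at this
    omega
  · have := hc.length_lt_of_isPrefix hc0 (hyw ▸ (invRev_isPrefix h).trans hb) (hyw' ▸ hb')
    rw [invRev_length] at this
    omega

theorem exists_toWord_eq_append_of_conj_pow_mem {H : Subgroup (FreeGroup α)} {g h₀ : FreeGroup α}
    (hw : h₀.toWord = u ++ c ++ invRev u) (hc : IsCyclicallyReduced c) (hc0 : c ≠ [])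
    {n : ℕ} (hn : n ≠ 0) (hpow : g * h₀ ^ n * g⁻¹ ∈ H) :
    ∃ g₁ g₂, g.toWord = g₁ ++ g₂ ∧ (∃ h ∈ H, g₁ <+: h.toWord) ∧
      (invRev g₂ <+: u ++ c ∨ invRev g₂ <+: u ++ invRev c) := by
  set m := 2 * g.toWord.length + 1
  have hs : n * m ≠ 0 := by positivity
  obtain ⟨t, ht⟩ := Nat.exists_eq_succ_of_ne_zero hs
  have hyw := toWord_pow_of_toWord_eq hw hc hs
  have hmem : g * h₀ ^ (n * m) * g⁻¹ ∈ H := by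
    rw [pow_mul, ← conj_pow]
    exact pow_mem hpow m
  refine exists_toWord_eq_append_of_conj_mem hmem ?_ hc hc0
    (Y := (replicate t c).flatten ++ invRev u) (Y' := invRev (replicate t c).flatten ++ invRev u)
    ?_ ?_
  · have hc1 : 1 ≤ c.length := length_pos_of_ne_nil hc0
    have : n * m ≤ n * m * c.length := Nat.le_mul_of_pos_right _ hc1
    have : m ≤ n * m := Nat.le_mul_of_pos_left _ (Nat.pos_of_ne_zero hn)
    simp only [hyw, length_append, length_flatten, map_replicate, sum_replicate, smul_eq_mul,
      invRev_length]
    omega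
  · rw [hyw, ht, replicate_succ, flatten_cons, append_assoc, append_assoc, append_assoc]
  · rw [toWord_inv, hyw, ht, replicate_succ', flatten_concat]
    simp only [invRev_append, invRev_invRev, append_assoc]

theorem exists_finset_forall_isPrefix_mul_inv_mem {H : Subgroup (FreeGroup α)} (hH : H.FG) :
    ∃ D : Finset (FreeGroup α), ∀ h ∈ H, ∀ p, p <+: h.toWord → ∃ d ∈ D, mk p * d⁻¹ ∈ H := by
  obtain ⟨S, rfl⟩ := hH
  refine ⟨insert 1 (S.biUnion fun s => (s.toWord.inits.map mk).toFinset), fun h hh => ?_⟩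
  induction hh using Subgroup.closure_induction with
  | mem s hs =>
    intro p hp
    refine ⟨mk p, Finset.mem_insert_of_mem ?_, by rw [mul_inv_cancel]; exact one_mem _⟩
    simpa using ⟨s, hs, p, hp, rfl⟩
  | one =>
    intro p hp
    rw [toWord_one, prefix_nil] at hp
    exact ⟨1, Finset.mem_insert_self _ _, by rw [hp, ← one_eq_mk, mul_inv_cancel]; exact one_mem _⟩
  | mul x y hx _ ihx ihy =>
    intro p hp
    obtain ⟨a, b, c, hxw, hyw, hxyw⟩ := exists_toWord_mul x y
    rw [hxyw] at hp
    by_cases hlen : p.length ≤ a.length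
    · exact ihx p (((isPrefix_append_of_length hlen).1 hp).trans (hxw ▸ prefix_append a b))
    obtain ⟨c', rfl⟩ := prefix_of_prefix_length_le (prefix_append a c) hp (by omega)
    obtain ⟨d, hd, hdH⟩ := ihy (invRev b ++ c')
      (hyw ▸ (prefix_append_right_inj _).2 ((prefix_append_right_inj a).1 hp))
    refine ⟨d, hd, ?_⟩
    have hsplit : mk (a ++ c') = x * mk (invRev b ++ c') := by
      rw [← mk_toWord (x := x), hxw, ← mul_mk, ← mul_mk, ← mul_mk, ← inv_mk]
      group
    rw [hsplit, mul_assoc]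
    exact mul_mem hx hdH
  | inv x hx ihx =>
    intro p hp
    obtain ⟨t, ht⟩ := hp
    have hxw : x.toWord = invRev t ++ invRev p := by
      rw [← invRev_invRev (L₁ := x.toWord), ← toWord_inv, ← ht, invRev_append]
    obtain ⟨d, hd, hdH⟩ := ihx (invRev t) (hxw ▸ prefix_append _ _)
    refine ⟨d, hd, ?_⟩
    have hsplit : mk p = x⁻¹ * mk (invRev t) := by
      rw [← mk_toWord (x := x), hxw, ← mul_mk, ← inv_mk, ← inv_mk (L := p)]
      group
    rw [hsplit, mul_assoc]
    exact mul_mem (inv_mem hx) hdH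

end DecidableEq

theorem relIndex_commensurator_ne_zero {H : Subgroup (FreeGroup α)}
    (hH : H.FG) (hne : H ≠ ⊥) : H.relIndex (commensurator H) ≠ 0 := by
  classical
  obtain ⟨h₀, hh₀, h₀ne⟩ := H.bot_or_exists_ne_one.resolve_left hne
  set u := reduceCyclically.conjugator h₀.toWord
  set c := reduceCyclically h₀.toWord
  have hw : h₀.toWord = u ++ c ++ invRev u :=
    (reduceCyclically.conj_conjugator_reduceCyclically _).symm
  have hc : IsCyclicallyReduced c := reduceCyclically.isCyclicallyReduced isReduced_toWord
  have hc0 : c ≠ [] := fun hc0 => h₀ne <| by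
    rw [← mk_toWord (x := h₀), hw, hc0, append_nil, ← mul_mk, ← inv_mk, mul_inv_cancel]
  obtain ⟨D, hD⟩ := exists_finset_forall_isPrefix_mul_inv_mem hH
  let T : Finset (FreeGroup α) :=
    (((u ++ c).inits ++ (u ++ invRev c).inits).map fun p => mk (invRev p)).toFinset
  refine Subgroup.relIndex_ne_zero_of_forall_mul_inv_mem (D * T).finite_toSet
    (Subgroup.le_commensurator le_rfl (by simp)) fun g hg => ?_
  obtain ⟨n, hn, hpow⟩ := Subgroup.exists_pow_conj_mem_of_mem_commensurator (inv_mem hg) hh₀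
  rw [inv_inv] at hpow
  obtain ⟨g₁, g₂, hg₁₂, ⟨h, hh, hg₁⟩, hg₂⟩ :=
    exists_toWord_eq_append_of_conj_pow_mem hw hc hc0 hn hpow
  obtain ⟨d, hd, hdH⟩ := hD h hh g₁ hg₁
  have hT : mk g₂ ∈ T := List.mem_toFinset.2 <| List.mem_map.2
    ⟨invRev g₂, mem_append.2 (hg₂.imp (mem_inits _ _).2 (mem_inits _ _).2), by rw [invRev_invRev]⟩
  refine ⟨d * mk g₂, Finset.mul_mem_mul hd hT, ?_⟩
  have hsplit : g = mk g₁ * mk g₂ := by rw [mul_mk, ← hg₁₂, mk_toWord]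
  rwa [hsplit, mul_inv_rev, mul_assoc, mul_inv_cancel_left]

end FreeGroup

theorem greenberg (r : ℕ) (H K L : Subgroup (FreeGroup (Fin r))) (hFG : H.FG)
    (hHK : H ≤ K) (hHL : H ≤ L)
    (hK : (H.subgroupOf K).index ≠ 0) (hL : (H.subgroupOf L).index ≠ 0) :
    (H.subgroupOf (K ⊔ L)).index ≠ 0 := by
  rcases eq_or_ne H ⊥ with rfl | hne
  · rw [Subgroup.eq_bot_of_relIndex_bot_ne_zero hK, Subgroup.eq_bot_of_relIndex_bot_ne_zero hL,
      sup_bot_eq, Subgroup.subgroupOf_self, Subgroup.index_top]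
    exact one_ne_zero
  · exact mt (Subgroup.relIndex_eq_zero_of_le_right
      (sup_le (Subgroup.le_commensurator hHK hK) (Subgroup.le_commensurator hHL hL)))
      (FreeGroup.relIndex_commensurator_ne_zero hFG hne)
end

section
/- Let A be a finite type, let F = FreeGroup A, and let H ≤ G be subgroups of F with H finitely generated, H nontrivial, and H of finite index in G. If a word t : List (A × Bool) is a prefix of the reduced word FreeGroup.toWord h for every h ∈ H with h ≠ 1, then t is a prefix of FreeGroup.toWord g for every g ∈ G with g ≠ 1. (Common prefixes of the nontrivial elements are preserved under finite-index extension.) -/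
/-!
Write the reduced word of `g ≠ 1` as `u ++ c ++ invRev u` with `c` cyclically reduced and
nonempty. For `n ≠ 0` the reduced words of `g ^ n` and `(g ^ n)⁻¹` are `u ++ cⁿ ++ invRev u` and
`u ++ invRev cⁿ ++ invRev u`; since `cⁿ` is again cyclically reduced, `cⁿ` and `invRev cⁿ` start
with different letters, so a common prefix of the two words is a prefix of `u`, hence of the word
of `g`. Finite index of `H` in `G` puts some such power `g ^ n` into `H`.
-/

open List

theorem List.IsPrefix.of_append_of_head?_ne {β : Type*} {t u l₁ l₂ : List β}
    (h₁ : t <+: u ++ l₁) (h₂ : t <+: u ++ l₂) (hne : l₁.head? ≠ l₂.head?) : t <+: u := by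
  rcases le_or_gt t.length u.length with hle | hlt
  · exact prefix_of_prefix_length_le h₁ (prefix_append u l₁) hle
  · obtain ⟨r, rfl⟩ := prefix_of_prefix_length_le (prefix_append u l₁) h₁ hlt.le
    obtain ⟨a, r, rfl⟩ := exists_cons_of_ne_nil (by rintro rfl; simp at hlt : r ≠ [])
    obtain ⟨s₁, rfl⟩ := (prefix_append_right_inj u).mp h₁
    obtain ⟨s₂, rfl⟩ := (prefix_append_right_inj u).mp h₂
    simp at hne

namespace FreeGroup

variable {α : Type*}

theorem IsCyclicallyReduced.head?_ne_head?_invRev {L : List (α × Bool)}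
    (h : IsCyclicallyReduced L) (hL : L ≠ []) : L.head? ≠ (invRev L).head? := by
  obtain ⟨a, L', rfl⟩ := exists_cons_of_ne_nil hL
  rw [invRev, head?_reverse, getLast?_map]
  intro hab
  obtain ⟨b, hb, rfl⟩ := Option.map_eq_some_iff.mp hab.symm
  simpa using h.2 b hb _ rfl

variable [DecidableEq α] {n : ℕ}

open reduceCyclically

theorem reduceCyclically_toWord_ne_nil {x : FreeGroup α} (hx : x ≠ 1) : reduceCyclically x.toWord ≠ [] := by
  intro hnil
  apply hx
  rw [← mk_toWord (x := x), ← conj_conjugator_reduceCyclically x.toWord, hnil, append_nil,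
    ← mul_mk, ← inv_mk, mul_inv_cancel]

theorem toWord_pow_of_ne_zero (x : FreeGroup α) (hn : n ≠ 0) :
    (x ^ n).toWord = conjugator x.toWord ++ (replicate n (reduceCyclically x.toWord)).flatten ++
      invRev (conjugator x.toWord) := by
  rw [toWord_pow, reduce_flatten_replicate isReduced_toWord, if_neg hn]

theorem prefix_toWord_of_prefix_toWord_pow_of_prefix_toWord_inv_pow {x : FreeGroup α} {t : List (α × Bool)}
    (hx : x ≠ 1) (hn : n ≠ 0) (h₁ : t <+: (x ^ n).toWord) (h₂ : t <+: (x ^ n)⁻¹.toWord) :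
    t <+: x.toWord := by
  set u := conjugator x.toWord
  set c := (replicate n (reduceCyclically x.toWord)).flatten
  have hc : c ≠ [] := by simpa [c, hn] using reduceCyclically_toWord_ne_nil hx
  have hw : (x ^ n).toWord = u ++ (c ++ invRev u) := by
    rw [toWord_pow_of_ne_zero x hn, append_assoc]
  have hw' : (x ^ n)⁻¹.toWord = u ++ (invRev c ++ invRev u) := by
    rw [toWord_inv, hw, invRev_append, invRev_append, invRev_invRev, append_assoc]
  rw [hw] at h₁
  rw [hw'] at h₂
  have hu : t <+: u := h₁.of_append_of_head?_ne h₂ <| by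
    rw [head?_append_of_ne_nil _ hc, head?_append_of_ne_nil _ (by simpa [invRev] using hc)]
    exact ((isCyclicallyReduced isReduced_toWord).flatten_replicate n).head?_ne_head?_invRev hc
  rw [← conj_conjugator_reduceCyclically x.toWord, append_assoc]
  exact hu.trans (prefix_append _ _)

end FreeGroup

theorem common_prefix_preserved_general (A : Type*) [DecidableEq A]
    (H G : Subgroup (FreeGroup A))
    (hfi : (H.subgroupOf G).index ≠ 0) (t : List (A × Bool))
    (ht : ∀ h ∈ H, h ≠ 1 → t <+: FreeGroup.toWord h) :
    ∀ g ∈ G, g ≠ 1 → t <+: FreeGroup.toWord g := by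
  intro g hg hg1
  obtain ⟨n, hn, -, hgnH, -⟩ := Subgroup.exists_pow_mem_of_relIndex_ne_zero hfi hg
  have hgn1 : g ^ n ≠ 1 := by rwa [Ne, pow_eq_one_iff_left hn.ne']
  exact FreeGroup.prefix_toWord_of_prefix_toWord_pow_of_prefix_toWord_inv_pow hg1 hn.ne'
    (ht _ hgnH hgn1) (ht _ (inv_mem hgnH) (inv_ne_one.mpr hgn1))

theorem common_prefix_preserved (A : Type*) [Finite A] [DecidableEq A]
    (H G : Subgroup (FreeGroup A)) (hFG : H.FG) (hne : H ≠ ⊥) (hHG : H ≤ G)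
    (hfi : (H.subgroupOf G).index ≠ 0) (t : List (A × Bool))
    (ht : ∀ h ∈ H, h ≠ 1 → t <+: FreeGroup.toWord h) :
    ∀ g ∈ G, g ≠ 1 → t <+: FreeGroup.toWord g :=
  common_prefix_preserved_general A H G hfi t ht
end

section
/- Let A be a finite type, let F = FreeGroup A, and let H be a nontrivial finitely generated subgroup of F that is cyclically reduced with respect to the basis A. If K ≤ H is a subgroup of finite index in H, then K is cyclically reduced as well: for every nonempty word t : List (A × Bool) there exists k ∈ K with k ≠ 1 such that t is not a prefix of FreeGroup.toWord k. -/
/-!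
Finite index gives, for every `h ∈ H`, a positive power `h ^ n ∈ K`. Writing the reduced word of
`h` as `c r c⁻¹` with `r` cyclically reduced, the reduced word of `h ^ n` is `c rⁿ c⁻¹`, so it
begins with the same letter as that of `h`. Hence the nontrivial element of `H` avoiding a given
first letter, supplied by cyclic reducedness of `H`, has a nontrivial power in `K` avoiding it too.
-/

/-- A subgroup `H` of a free group is cyclically reduced (w.r.t. the basis) if the
nontrivial elements of `H` have no common nonempty prefix. -/
def CyclicallyReducedSubgroup {A : Type*} [DecidableEq A] (H : Subgroup (FreeGroup A)) : Prop :=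
  ∀ t : List (A × Bool), t ≠ [] → ∃ h ∈ H, h ≠ 1 ∧ ¬ (t <+: FreeGroup.toWord h)

theorem FreeGroup.head?_toWord_pow {α : Type*} [DecidableEq α] (x : FreeGroup α) {n : ℕ}
    (hn : n ≠ 0) : (x ^ n).toWord.head? = x.toWord.head? := by
  rw [toWord_pow, reduceCyclically.reduce_flatten_replicate isReduced_toWord, if_neg hn]
  conv_rhs => rw [← reduceCyclically.conj_conjugator_reduceCyclically x.toWord]
  cases reduceCyclically.conjugator x.toWord <;> simp [hn]

theorem Subgroup.exists_pow_mem_of_subgroupOf_index_ne_zero {G : Type*} [Group G]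
    {H K : Subgroup G} (hK : (K.subgroupOf H).index ≠ 0) {x : G} (hx : x ∈ H) :
    ∃ n ≠ 0, x ^ n ∈ K := by
  obtain ⟨n, hn, -, hnK⟩ := exists_pow_mem_of_index_ne_zero hK ⟨x, hx⟩
  exact ⟨n, hn.ne', hnK⟩

theorem cyclically_reduced_finite_index_subgroup_general (A : Type*) [DecidableEq A]
    (H : Subgroup (FreeGroup A))
    (hcr : CyclicallyReducedSubgroup H)
    (K : Subgroup (FreeGroup A)) (hfi : (K.subgroupOf H).index ≠ 0) :
    ∀ t : List (A × Bool), t ≠ [] → ∃ k ∈ K, k ≠ 1 ∧ ¬ (t <+: FreeGroup.toWord k) := by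
  rintro (_ | ⟨a, t⟩) ht
  · exact absurd rfl ht
  obtain ⟨h, hH, h1, ha⟩ := hcr [a] (List.cons_ne_nil _ _)
  obtain ⟨n, hn, hnK⟩ := Subgroup.exists_pow_mem_of_subgroupOf_index_ne_zero hfi hH
  rw [List.singleton_prefix_iff_head?_eq_some, ← h.head?_toWord_pow hn,
    ← List.singleton_prefix_iff_head?_eq_some] at ha
  exact ⟨h ^ n, hnK, by simp [pow_eq_one_iff, h1, hn],
    fun hpre => ha ((List.prefix_append [a] t).trans hpre)⟩

theorem cyclically_reduced_finite_index_subgroup (A : Type*) [Finite A] [DecidableEq A]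
    (H : Subgroup (FreeGroup A)) (hFG : H.FG) (hne : H ≠ ⊥)
    (hcr : CyclicallyReducedSubgroup H)
    (K : Subgroup (FreeGroup A)) (hKH : K ≤ H) (hfi : (K.subgroupOf H).index ≠ 0) :
    ∀ t : List (A × Bool), t ≠ [] → ∃ k ∈ K, k ≠ 1 ∧ ¬ (t <+: FreeGroup.toWord k) :=
  cyclically_reduced_finite_index_subgroup_general A H hcr K hfi
end

section
/- Let f : ℕ → ℝ satisfy f 1 ≤ 1 and f n ≤ n * f (n / 2) for every n ≥ 2 (where n / 2 denotes integer division). Then for every n ≥ 1, f n ≤ (n : ℝ) ^ ((1 + Real.logb 2 n) / 2). -/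
theorem recursive_bound (f : ℕ → ℝ) (h1 : f 1 ≤ 1)
    (hrec : ∀ n : ℕ, 2 ≤ n → f n ≤ n * f (n / 2)) :
    ∀ n : ℕ, 1 ≤ n → f n ≤ (n : ℝ) ^ ((1 + Real.logb 2 n) / 2) := by
  intro n
  induction n using Nat.strong_induction_on with
  | _ n ih =>
    intro hn
    rcases eq_or_lt_of_le hn with h | h2
    · subst h
      simpa using h1
    · have h2 : 2 ≤ n := h2
      set m := n / 2 with hm
      have hm1 : 1 ≤ m := (Nat.one_le_div_iff (by norm_num)).mpr h2
      have hmn : m < n := Nat.div_lt_self (by omega) (by norm_num)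
      have ihm := ih m hmn hm1
      have step := hrec n h2
      set N : ℝ := (n : ℝ) with hN
      set M : ℝ := (m : ℝ) with hMdef
      have hN2 : (2 : ℝ) ≤ N := by rw [hN]; exact_mod_cast h2
      have hN0 : (0 : ℝ) < N := by linarith
      have hM1 : (1 : ℝ) ≤ M := by rw [hMdef]; exact_mod_cast hm1
      have hM0 : (0 : ℝ) < M := by linarith
      have hMle : M ≤ N / 2 := by
        rw [hMdef, hm]
        exact_mod_cast Nat.cast_div_le
      set Ln : ℝ := Real.logb 2 N with hLn
      set Lm : ℝ := Real.logb 2 M with hLm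
      have hLm0 : 0 ≤ Lm := Real.logb_nonneg (by norm_num) hM1
      have hLnN2 : Real.logb 2 (N / 2) = Ln - 1 := by
        rw [Real.logb_div (by positivity) (by norm_num), Real.logb_self_eq_one] <;> norm_num
      have hLmLn : Lm ≤ Ln - 1 := by
        rw [← hLnN2]
        exact Real.logb_le_logb_of_le (by norm_num) hM0 hMle
      -- chain
      have c1 : f n ≤ N * f m := step
      have c2 : f m ≤ M ^ ((1 + Lm) / 2) := ihm
      have c3 : M ^ ((1 + Lm) / 2) ≤ (N / 2) ^ ((1 + Lm) / 2) :=
        Real.rpow_le_rpow (le_of_lt hM0) hMle (by linarith)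
      have hN2' : (1 : ℝ) ≤ N / 2 := by linarith
      have c4 : (N / 2) ^ ((1 + Lm) / 2) ≤ (N / 2) ^ (Ln / 2) :=
        Real.rpow_le_rpow_of_exponent_le hN2' (by linarith)
      have key : (N / 2) ^ (Ln / 2) = N ^ ((Ln - 1) / 2) := by
        have h2N : (2 : ℝ) ^ Ln = N := Real.rpow_logb (by norm_num) (by norm_num) hN0
        rw [Real.div_rpow (le_of_lt hN0) (by norm_num)]
        have h2half : (2 : ℝ) ^ (Ln / 2) = N ^ ((1 : ℝ) / 2) := by
          rw [← h2N, ← Real.rpow_mul (by norm_num : (0:ℝ) ≤ 2)]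
          congr 1
          ring
        rw [h2half, ← Real.rpow_sub hN0]
        ring_nf
      have final : N * N ^ ((Ln - 1) / 2) = N ^ ((1 + Ln) / 2) := by
        nth_rewrite 1 [← Real.rpow_one N]
        rw [← Real.rpow_add hN0]
        ring_nf
      calc f n ≤ N * f m := c1
        _ ≤ N * (M ^ ((1 + Lm) / 2)) := by
            apply mul_le_mul_of_nonneg_left c2 (le_of_lt hN0)
        _ ≤ N * ((N / 2) ^ ((1 + Lm) / 2)) := by
            apply mul_le_mul_of_nonneg_left c3 (le_of_lt hN0)
        _ ≤ N * ((N / 2) ^ (Ln / 2)) := by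
            apply mul_le_mul_of_nonneg_left c4 (le_of_lt hN0)
        _ = N * N ^ ((Ln - 1) / 2) := by rw [key]
        _ = N ^ ((1 + Ln) / 2) := final
end
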